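/- arXiv:1803.00988 — 5 statements merged into one kernel-verified Lean document; each statement's English description precedes it below -/
import Mathlib

section
/- If p/q is a reduced fraction, then the product over j from 0 to q-1 of |1 + e^{-2πi(θ + jp/q)}| equals 2|sin(πq(θ + 1/2))| for all real θ. -/
open Real

/-! Since `p` is coprime to `q`, `ζ = e^{-2πip/q}` is a primitive `q`-th root of unity, and with
`w = e^{-2πi(θ + 1/2)} = -e^{-2πiθ}` the `j`-th factor is `1 - ζ^j w`. Hence the product of the
factors is `1 - w^q`, whose modulus is `2 |sin (π q (θ + 1/2))|`. -/

theorem IsPrimitiveRoot.prod_one_sub_pow_mul {K : Type*} [Field K] {q : ℕ} (hq : 0 < q) {ζ : K}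
    (hζ : IsPrimitiveRoot ζ q) (α : K) :
    ∏ i ∈ Finset.range q, (1 - ζ ^ i * α) = 1 - α ^ q := by
  simpa [Polynomial.eval_prod] using
    (congrArg (Polynomial.eval 1) (X_pow_sub_C_eq_prod hζ hq (rfl : α ^ q = α ^ q))).symm

theorem Complex.isPrimitiveRoot_exp_int_of_coprime (k : ℤ) (n : ℕ) (h0 : n ≠ 0)
    (hk : k.gcd n = 1) : IsPrimitiveRoot (exp (2 * π * I * (k / n))) n := by
  have h := (isPrimitiveRoot_exp n h0).zpow_of_gcd_eq_one k hk
  rwa [← exp_int_mul, show (k : ℂ) * (2 * π * I / n) = 2 * π * I * (k / n) by ring] at h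

theorem Complex.norm_one_sub_exp_I_mul_ofReal (x : ℝ) :
    ‖1 - exp (I * x)‖ = 2 * |Real.sin (x / 2)| := by
  rw [norm_sub_rev, norm_exp_I_mul_ofReal_sub_one, norm_mul, Real.norm_two, Real.norm_eq_abs]

/-- If `p/q` is a reduced fraction, then
`∏_{j=0}^{q-1} |1 + e^{-2πi(θ + j p/q)}| = 2 |sin (π q (θ + 1/2))|` for every real `θ`. -/
theorem stmt_1 (p : ℤ) (q : ℕ) (hq : 1 ≤ q) (hpq : Int.gcd p (q : ℤ) = 1) (θ : ℝ) :
    ∏ j ∈ Finset.range q,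
        ‖(1 + Complex.exp (-2 * π * Complex.I * (θ + (j : ℝ) * (p : ℝ) / (q : ℝ))))‖
      = 2 * |Real.sin (π * q * (θ + 1 / 2))| := by
  set ζ := Complex.exp (2 * π * Complex.I * ((-p : ℤ) / q))
  set w := Complex.exp (-2 * π * Complex.I * (θ + 1 / 2))
  have hw : w = -Complex.exp (-2 * π * Complex.I * θ) := by
    simp only [w, ← Complex.exp_sub_pi_mul_I]
    congr 1
    ring
  have hζ : IsPrimitiveRoot ζ q :=
    Complex.isPrimitiveRoot_exp_int_of_coprime _ q (by omega) (by rwa [Int.neg_gcd])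
  have hterm (j : ℕ) :
      1 + Complex.exp (-2 * π * Complex.I * (θ + j * p / q)) = 1 - ζ ^ j * w := by
    rw [hw, ← Complex.exp_nat_mul, mul_neg, ← Complex.exp_add, sub_neg_eq_add]
    push_cast
    ring_nf
  have hwq : w ^ q = Complex.exp (Complex.I * ↑(-(2 * π * q * (θ + 1 / 2)))) := by
    rw [← Complex.exp_nat_mul]
    push_cast
    ring_nf
  push_cast
  simp_rw [hterm, ← norm_prod, hζ.prod_one_sub_pow_mul (by omega), hwq,
    Complex.norm_one_sub_exp_I_mul_ofReal, neg_div, Real.sin_neg, abs_neg]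
  ring_nf
end

section
/- (Lidskii inequality) Let A, B be n×n Hermitian matrices with eigenvalues E_1(·) ≥ ··· ≥ E_n(·). For any indices 1 ≤ i_1 < ··· < i_k ≤ n, one has E_{i_1}(A+B) + ··· + E_{i_k}(A+B) ≤ E_{i_1}(A) + ··· + E_{i_k}(A) + E_1(B) + ··· + E_k(B). -/
/-!
Put `μ = E_k(B)` and let `B⁺` be `B` with every eigenvalue below `μ` raised to `μ`. Then
`A + B ≤ A + B⁺` and `A + μ ≤ A + B⁺`, so by Weyl's monotonicity `E_m(A + B) ≤ E_m(A + B⁺)` and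
`E_m(A) + μ ≤ E_m(A + B⁺)` for every `m`. Taking traces,
`∑ₘ (E_m(A + B⁺) - E_m(A)) = tr B⁺ = E_1(B) + ⋯ + E_k(B) + (n - k) μ`, and each of the `n - k`
indices outside `{i_1, …, i_k}` contributes at least `μ` to the left-hand side.
Weyl's monotonicity is the Courant–Fischer dimension count: the eigenvectors of one operator for
its `m` largest eigenvalues and those of the other for its `n - m + 1` smallest span subspaces
with a common nonzero vector.
-/

open scoped InnerProductSpace
open Module Submodule Finset Function

namespace Function.Injective

variable {ι κ M : Type*} [Fintype ι] [Fintype κ] {i : ι → κ}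

lemma sum_comp_add_sum_compl [DecidableEq κ] [AddCommMonoid M] (hi : Injective i) (d : κ → M) :
    ∑ j, d (i j) + ∑ m ∈ (univ.map ⟨i, hi⟩)ᶜ, d m = ∑ m, d m := by
  simpa using sum_add_sum_compl (univ.map ⟨i, hi⟩) d

lemma card_compl_map [DecidableEq κ] (hi : Injective i) :
    (univ.map ⟨i, hi⟩)ᶜ.card = Fintype.card κ - Fintype.card ι := by
  rw [card_compl, card_map, card_univ]

lemma sum_comp_add_nsmul_le [AddCommMonoid M] [PartialOrder M] [IsOrderedAddMonoid M]
    (hi : Injective i) {d : κ → M} {μ : M}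
    (hd : ∀ m, m ∉ Set.range i → μ ≤ d m) :
    ∑ j, d (i j) + (Fintype.card κ - Fintype.card ι) • μ ≤ ∑ m, d m := by
  classical
  rw [← hi.sum_comp_add_sum_compl d, ← hi.card_compl_map]
  gcongr
  exact card_nsmul_le_sum _ _ _ fun m hm => hd m (by simpa using hm)

lemma sum_comp_add_nsmul_eq [AddCommMonoid M] (hi : Injective i) {d : κ → M} {μ : M}
    (hd : ∀ m, m ∉ Set.range i → d m = μ) :
    ∑ j, d (i j) + (Fintype.card κ - Fintype.card ι) • μ = ∑ m, d m := by
  classical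
  rw [← hi.sum_comp_add_sum_compl d, ← hi.card_compl_map, ← sum_const]
  congr 1
  exact sum_congr rfl fun m hm => (hd m (by simpa using hm)).symm

end Function.Injective

lemma Fin.sum_comp_le_sum_castLE {n k : ℕ} (hk : k ≤ n) {t d : Fin n → ℝ} {μ : ℝ}
    (hhead : ∀ j : Fin k, μ ≤ t (Fin.castLE hk j)) (htail : ∀ m : Fin n, k ≤ (m : ℕ) → t m ≤ μ)
    (hd : ∀ m, μ ≤ d m) (hsum : ∑ m, d m = ∑ m, max (t m) μ) {i : Fin k → Fin n}
    (hi : Injective i) : ∑ j, d (i j) ≤ ∑ j, t (Fin.castLE hk j) := by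
  have hcompl := hi.sum_comp_add_nsmul_le fun m _ => hd m
  have hsplit := (Fin.castLE_injective hk).sum_comp_add_nsmul_eq (d := fun m => max (t m) μ)
    fun m hm => max_eq_right <| htail m <| by
      by_contra! h
      exact hm ⟨⟨m, h⟩, rfl⟩
  simp only [Fintype.card_fin, fun j => max_eq_left (hhead j)] at hcompl hsplit
  linarith

namespace OrthonormalBasis

variable {𝕜 E ι : Type*} [RCLike 𝕜] [NormedAddCommGroup E] [InnerProductSpace 𝕜 E] [Fintype ι]
  (b : OrthonormalBasis ι 𝕜 E) {T : E →ₗ[𝕜] E} {e : ι → ℝ}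

lemma exists_apply_eq_smul (f : ι → ℝ) : ∃ P : E →ₗ[𝕜] E, ∀ j, P (b j) = (f j : 𝕜) • b j :=
  ⟨b.toBasis.constr 𝕜 fun j => (f j : 𝕜) • b j, fun j => b.toBasis.constr_basis 𝕜 _ j⟩

lemma inner_apply_eq_sum_of_apply_eq_smul (hT : ∀ j, T (b j) = (e j : 𝕜) • b j) (x y : E) :
    ⟪x, T y⟫_𝕜 = ∑ j, (e j : 𝕜) * (⟪x, b j⟫_𝕜 * ⟪b j, y⟫_𝕜) := by
  conv_lhs => rw [← b.sum_repr' y]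
  simp only [map_sum, map_smul, hT, inner_sum, inner_smul_right, smul_smul]
  exact sum_congr rfl fun j _ => by ring

lemma isSymmetric_of_apply_eq_smul (hT : ∀ j, T (b j) = (e j : 𝕜) • b j) : T.IsSymmetric := by
  intro x y
  rw [← inner_conj_symm, b.inner_apply_eq_sum_of_apply_eq_smul hT,
    b.inner_apply_eq_sum_of_apply_eq_smul hT, map_sum]
  exact sum_congr rfl fun j _ => by simp [mul_comm]

lemma re_inner_apply_self_of_apply_eq_smul (hT : ∀ j, T (b j) = (e j : 𝕜) • b j) (x : E) :
    RCLike.re ⟪x, T x⟫_𝕜 = ∑ j, e j * ‖⟪b j, x⟫_𝕜‖ ^ 2 := by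
  rw [b.inner_apply_eq_sum_of_apply_eq_smul hT, map_sum]
  refine sum_congr rfl fun j _ => ?_
  rw [← inner_conj_symm, RCLike.conj_mul, ← RCLike.ofReal_pow, ← RCLike.ofReal_mul,
    RCLike.ofReal_re]

lemma re_inner_apply_self_le_of_le {P : E →ₗ[𝕜] E} {f : ι → ℝ}
    (hT : ∀ j, T (b j) = (e j : 𝕜) • b j) (hP : ∀ j, P (b j) = (f j : 𝕜) • b j) (hef : e ≤ f)
    (x : E) : RCLike.re ⟪x, T x⟫_𝕜 ≤ RCLike.re ⟪x, P x⟫_𝕜 := by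
  rw [b.re_inner_apply_self_of_apply_eq_smul hT, b.re_inner_apply_self_of_apply_eq_smul hP]
  gcongr with j
  exact hef j

lemma trace_eq_sum_of_apply_eq_smul (hT : ∀ j, T (b j) = (e j : 𝕜) • b j) :
    T.trace 𝕜 E = ∑ j, (e j : 𝕜) := by
  simp [LinearMap.trace_eq_sum_inner T b, hT, inner_smul_right]

lemma inner_eq_zero_of_mem_span_image {s : Set ι} {x : E} (hx : x ∈ span 𝕜 (b '' s)) {j : ι}
    (hj : j ∉ s) : ⟪b j, x⟫_𝕜 = 0 := by
  rw [← b.coe_toBasis, Basis.mem_span_image] at hx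
  rw [← b.repr_apply_apply, ← b.coe_toBasis_repr_apply]
  exact Finsupp.notMem_support_iff.mp fun h => hj (hx h)

lemma finrank_span_image (s : Finset ι) : finrank 𝕜 (span 𝕜 (b '' s)) = s.card := by
  rw [Set.image_eq_range]
  exact (finrank_span_eq_card (b.orthonormal.linearIndependent.comp _ Subtype.val_injective)).trans
    (by simp)

lemma mul_norm_sq_le_re_inner_apply_self (hT : ∀ j, T (b j) = (e j : 𝕜) • b j) {s : Set ι}
    {c : ℝ} (hc : ∀ j ∈ s, c ≤ e j) {x : E} (hx : x ∈ span 𝕜 (b '' s)) :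
    c * ‖x‖ ^ 2 ≤ RCLike.re ⟪x, T x⟫_𝕜 := by
  rw [b.re_inner_apply_self_of_apply_eq_smul hT, ← b.sum_sq_norm_inner_right, mul_sum]
  refine sum_le_sum fun j _ => ?_
  by_cases hj : j ∈ s
  · exact mul_le_mul_of_nonneg_right (hc j hj) (sq_nonneg _)
  · simp [b.inner_eq_zero_of_mem_span_image hx hj]

lemma re_inner_apply_self_le_mul_norm_sq (hT : ∀ j, T (b j) = (e j : 𝕜) • b j) {s : Set ι}
    {c : ℝ} (hc : ∀ j ∈ s, e j ≤ c) {x : E} (hx : x ∈ span 𝕜 (b '' s)) :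
    RCLike.re ⟪x, T x⟫_𝕜 ≤ c * ‖x‖ ^ 2 := by
  rw [b.re_inner_apply_self_of_apply_eq_smul hT, ← b.sum_sq_norm_inner_right, mul_sum]
  refine sum_le_sum fun j _ => ?_
  by_cases hj : j ∈ s
  · exact mul_le_mul_of_nonneg_right (hc j hj) (sq_nonneg _)
  · simp [b.inner_eq_zero_of_mem_span_image hx hj]

end OrthonormalBasis

lemma Submodule.exists_mem_inf_ne_zero_of_finrank_lt {K V : Type*} [DivisionRing K]
    [AddCommGroup V] [Module K V] [FiniteDimensional K V] {s t : Submodule K V}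
    (h : finrank K V < finrank K s + finrank K t) : ∃ x ∈ s ⊓ t, x ≠ 0 := by
  by_contra! hst
  exact h.not_ge (finrank_add_finrank_le_of_disjoint (disjoint_iff_inf_le.mpr fun x hx =>
    (mem_bot K).mpr (hst x hx)))

section Eigenvalues

variable {𝕜 E : Type*} [RCLike 𝕜] [NormedAddCommGroup E] [InnerProductSpace 𝕜 E]

theorem add_le_of_re_inner_apply_self_le {n : ℕ} {S T : E →ₗ[𝕜] E}
    {b b' : OrthonormalBasis (Fin n) 𝕜 E} {e e' : Fin n → ℝ} (he : Antitone e) (he' : Antitone e')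
    (hS : ∀ j, S (b j) = (e j : 𝕜) • b j) (hT : ∀ j, T (b' j) = (e' j : 𝕜) • b' j) {μ : ℝ}
    (hST : ∀ x, RCLike.re ⟪x, S x⟫_𝕜 + μ * ‖x‖ ^ 2 ≤ RCLike.re ⟪x, T x⟫_𝕜) (m : Fin n) :
    e m + μ ≤ e' m := by
  have : FiniteDimensional 𝕜 E := b.toBasis.finiteDimensional_of_finite
  have hdim : finrank 𝕜 E < finrank 𝕜 (span 𝕜 (b '' ↑(Finset.Iic m))) +
      finrank 𝕜 (span 𝕜 (b' '' ↑(Finset.Ici m))) := by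
    rw [b.finrank_span_image, b'.finrank_span_image, finrank_eq_card_basis b.toBasis,
      Fintype.card_fin, Fin.card_Iic, Fin.card_Ici]
    omega
  obtain ⟨x, ⟨hxS, hxT⟩, hx⟩ := exists_mem_inf_ne_zero_of_finrank_lt hdim
  have hlow := b.mul_norm_sq_le_re_inner_apply_self hS (fun j hj => he (Finset.mem_Iic.mp hj)) hxS
  have hupp := b'.re_inner_apply_self_le_mul_norm_sq hT (fun j hj => he' (Finset.mem_Ici.mp hj)) hxT
  have hx2 : 0 < ‖x‖ ^ 2 := by positivity
  nlinarith [hST x]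

theorem sum_eigenvalues_add_le {n k : ℕ} (hk : k ≤ n) {S T : E →ₗ[𝕜] E}
    {bS bT bST : OrthonormalBasis (Fin n) 𝕜 E} {eS eT eST : Fin n → ℝ}
    (heS : Antitone eS) (heT : Antitone eT) (heST : Antitone eST)
    (hS : ∀ j, S (bS j) = (eS j : 𝕜) • bS j) (hT : ∀ j, T (bT j) = (eT j : 𝕜) • bT j)
    (hST : ∀ j, (S + T) (bST j) = (eST j : 𝕜) • bST j) {i : Fin k → Fin n} (hi : Injective i) :
    ∑ j, eST (i j) ≤ ∑ j, eS (i j) + ∑ j, eT (Fin.castLE hk j) := by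
  rcases Nat.eq_zero_or_pos k with rfl | hk0
  · simp
  set μ := eT ⟨k - 1, by omega⟩
  obtain ⟨P, hP⟩ := bT.exists_apply_eq_smul fun j => max (eT j) μ
  have : FiniteDimensional 𝕜 E := bS.toBasis.finiteDimensional_of_finite
  have hn : finrank 𝕜 E = n := by simp [finrank_eq_card_basis bS.toBasis]
  have hSP := (bS.isSymmetric_of_apply_eq_smul hS).add (bT.isSymmetric_of_apply_eq_smul hP)
  set e' := hSP.eigenvalues hn
  have he' := hSP.eigenvalues_antitone hn
  have hSP' := hSP.apply_eigenvectorBasis hn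
  have hle₁ : ∀ m, eST m ≤ e' m := fun m => by
    simpa using add_le_of_re_inner_apply_self_le heST he' hST hSP' (μ := 0) (fun x => by
      simpa [inner_add_right] using bT.re_inner_apply_self_le_of_le hT hP
        (fun j => le_max_left _ _) x) m
  have hle₂ : ∀ m, eS m + μ ≤ e' m := by
    refine add_le_of_re_inner_apply_self_le heS he' hS hSP' fun x => ?_
    have hPx := bT.mul_norm_sq_le_re_inner_apply_self hP (s := Set.univ)
      (fun j _ => le_max_right _ _) (by simpa using bT.toBasis.mem_span x)
    rw [LinearMap.add_apply, inner_add_right, map_add]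
    linarith
  have htrace : ∑ m, (e' m - eS m) = ∑ m, max (eT m) μ := by
    have h := map_add (LinearMap.trace 𝕜 E) S P
    rw [(hSP.eigenvectorBasis hn).trace_eq_sum_of_apply_eq_smul hSP',
      bS.trace_eq_sum_of_apply_eq_smul hS, bT.trace_eq_sum_of_apply_eq_smul hP] at h
    rw [sum_sub_distrib, sub_eq_iff_eq_add']
    exact_mod_cast h
  calc ∑ j, eST (i j) ≤ ∑ j, eS (i j) + ∑ j, (e' (i j) - eS (i j)) := by
        rw [← sum_add_distrib]
        exact sum_le_sum fun j _ => by linarith [hle₁ (i j)]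
    _ ≤ ∑ j, eS (i j) + ∑ j, eT (Fin.castLE hk j) := add_le_add le_rfl
        (Fin.sum_comp_le_sum_castLE hk (fun j => heT (Fin.mk_le_mk.mpr (by omega)))
          (fun m hm => heT (Fin.mk_le_mk.mpr (by omega))) (fun m => by linarith [hle₂ m])
          htrace hi)

lemma Matrix.IsHermitian.toEuclideanLin_eigenvectorBasis {ι : Type*} [Fintype ι] [DecidableEq ι]
    {A : Matrix ι ι 𝕜} (hA : A.IsHermitian) (j : ι) :
    Matrix.toEuclideanLin A (hA.eigenvectorBasis j) =
      (hA.eigenvalues j : 𝕜) • hA.eigenvectorBasis j := by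
  rw [Matrix.toLpLin_apply, hA.mulVec_eigenvectorBasis, RCLike.real_smul_eq_coe_smul (K := 𝕜)]
  rfl

end Eigenvalues

/-- Lidskii inequality: if `A`, `B` are Hermitian `n × n` matrices and
`EA`, `EB`, `EAB` enumerate the eigenvalues of `A`, `B`, `A + B` in decreasing order,
then for any strictly increasing choice of indices `i : Fin k → Fin n`,
`∑_j E_{i_j}(A+B) ≤ ∑_j E_{i_j}(A) + ∑_{j=1}^k E_j(B)`. -/
theorem stmt_4 {n k : ℕ} (hk : k ≤ n) (A B : Matrix (Fin n) (Fin n) ℂ)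
    (hA : A.IsHermitian) (hB : B.IsHermitian)
    (EA EB EAB : Fin n → ℝ)
    (hEAa : Antitone EA) (hEBa : Antitone EB) (hEABa : Antitone EAB)
    (hEA : ∃ σ : Equiv.Perm (Fin n), EA = hA.eigenvalues ∘ σ)
    (hEB : ∃ σ : Equiv.Perm (Fin n), EB = hB.eigenvalues ∘ σ)
    (hEAB : ∃ σ : Equiv.Perm (Fin n), EAB = (hA.add hB).eigenvalues ∘ σ)
    (i : Fin k → Fin n) (hi : StrictMono i) :
    ∑ j : Fin k, EAB (i j) ≤ ∑ j : Fin k, EA (i j) + ∑ j : Fin k, EB (Fin.castLE hk j) := by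
  obtain ⟨σA, rfl⟩ := hEA
  obtain ⟨σB, rfl⟩ := hEB
  obtain ⟨σAB, rfl⟩ := hEAB
  refine sum_eigenvalues_add_le hk hEAa hEBa hEABa (S := Matrix.toEuclideanLin A)
    (T := Matrix.toEuclideanLin B) (bS := hA.eigenvectorBasis.reindex σA.symm)
    (bT := hB.eigenvectorBasis.reindex σB.symm)
    (bST := (hA.add hB).eigenvectorBasis.reindex σAB.symm) (fun j => ?_) (fun j => ?_)
    (fun j => ?_) hi.injective
  · simpa using hA.toEuclideanLin_eigenvectorBasis (σA j)
  · simpa using hB.toEuclideanLin_eigenvectorBasis (σB j)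
  · simpa [← map_add] using (hA.add hB).toEuclideanLin_eigenvectorBasis (σAB j)
end

section
/- Let S ⊂ ℝ and suppose S has a sequence of covers S ⊂ S_n where each S_n is a union of q_n intervals, q_n → ∞, and |S_n| < C/q_n^β for positive constants C and β. Then the Hausdorff dimension of S is at most 1/(1+β). -/
/-!
Cut the line into cells of length `δₙ = C qₙ^{-(1+β)}`, so that `qₙ δₙ = C qₙ^{-β}`. The cells
contained in `Sₙ` number at most `|Sₙ| / δₙ < qₙ`, and every other cell meeting `Sₙ` contains one
of the `2 qₙ` endpoints of its intervals, so `S` is covered by `O(qₙ)` cells of diameter `δₙ`.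
For `d > 1 / (1 + β)` the corresponding Hausdorff sums `O(qₙ δₙ^d) = O(qₙ^{1 - (1+β) d})` tend to
`0`, hence `μH[d] S = 0`.
-/

open MeasureTheory Set Filter Topology Function
open scoped ENNReal Finset

section Hausdorff

variable {X ι α : Type*} [EMetricSpace X] [MeasurableSpace X] [BorelSpace X]

theorem dimH_le_ofReal_of_hausdorffMeasure_eq_zero {s : Set X} {D : ℝ}
    (h : ∀ d : ℝ, D < d → μH[d] s = 0) : dimH s ≤ ENNReal.ofReal D := by
  refine dimH_le fun d hd => le_of_not_gt fun hlt => ?_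
  have hDd : D < d := by
    rw [← ENNReal.ofReal_coe_nnreal, ENNReal.ofReal_lt_ofReal_iff'] at hlt
    exact hlt.1
  simp [h d hDd] at hd

theorem hausdorffMeasure_eq_zero_of_finite_covers {l : Filter α} [l.NeBot] {d : ℝ} (hd : 0 ≤ d)
    {s : Set X} (r : α → ℝ≥0∞) (hr : Tendsto r l (𝓝 0)) (t : α → ι → Set X)
    (K : α → Finset ι) (ht : ∀ᶠ n in l, ∀ i ∈ K n, Metric.ediam (t n i) ≤ r n)
    (hst : ∀ᶠ n in l, s ⊆ ⋃ i ∈ K n, t n i)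
    (hsum : Tendsto (fun n => #(K n) * r n ^ d) l (𝓝 0)) : μH[d] s = 0 := by
  refine le_antisymm ?_ zero_le
  calc μH[d] s ≤ liminf (fun n => ∑ i : K n, Metric.ediam (t n i) ^ d) l := by
        refine Measure.hausdorffMeasure_le_liminf_sum d s r hr (fun n (i : K n) => t n i)
          (ht.mono fun n h i => h i i.2) (hst.mono fun n h => h.trans ?_)
        simp only [iUnion_subset_iff]
        exact fun i hi => subset_iUnion (fun i : K n => t n i) ⟨i, hi⟩
    _ ≤ liminf (fun n => #(K n) * r n ^ d) l := by
        refine liminf_le_liminf (ht.mono fun n h => ?_)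
        calc ∑ i : K n, Metric.ediam (t n i) ^ d ≤ ∑ _i : K n, r n ^ d :=
              Finset.sum_le_sum fun i _ => ENNReal.rpow_le_rpow (h i i.2) hd
          _ = #(K n) * r n ^ d := by simp
    _ = 0 := hsum.liminf_eq

end Hausdorff

theorem Icc_subset_or_left_mem_or_right_mem {α : Type*} [LinearOrder α] {a b c e x : α}
    (hx : x ∈ Icc a b) (hx' : x ∈ Icc c e) : Icc c e ⊆ Icc a b ∨ a ∈ Icc c e ∨ b ∈ Icc c e := by
  by_cases hac : a ≤ c <;> by_cases heb : e ≤ b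
  · exact Or.inl (Icc_subset_Icc hac heb)
  all_goals simp only [mem_Icc] at *; grind

def gridCell (δ : ℝ) (k : ℤ) : Set ℝ := Icc (k * δ) (k * δ + δ)

section Grid

variable {δ : ℝ}

theorem mem_gridCell_floor (hδ : 0 < δ) (x : ℝ) : x ∈ gridCell δ ⌊x / δ⌋ := by
  have h₁ := Int.floor_le (x / δ)
  have h₂ := Int.lt_floor_add_one (x / δ)
  rw [le_div_iff₀ hδ] at h₁
  rw [div_lt_iff₀ hδ, add_mul, one_mul] at h₂
  exact ⟨h₁, h₂.le⟩

theorem eq_floor_or_of_mem_gridCell (hδ : 0 < δ) {k : ℤ} {x : ℝ} (hx : x ∈ gridCell δ k) :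
    k = ⌊x / δ⌋ ∨ k = ⌊x / δ⌋ - 1 := by
  obtain ⟨h₁, h₂⟩ := hx
  have hlo : k ≤ ⌊x / δ⌋ := Int.le_floor.2 ((le_div_iff₀ hδ).2 h₁)
  have hhi : ⌊x / δ⌋ ≤ k + 1 := Int.floor_le_iff.2 <| by
    rw [div_lt_iff₀ hδ]; push_cast; linarith
  omega

theorem ediam_gridCell (k : ℤ) : Metric.ediam (gridCell δ k) = ENNReal.ofReal δ := by
  rw [gridCell, Real.ediam_Icc, add_sub_cancel_left]

theorem card_mul_le_volume_of_gridCell_subset {T : Set ℝ} {F : Finset ℤ}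
    (hF : ∀ k ∈ F, gridCell δ k ⊆ T) : #F * ENNReal.ofReal δ ≤ volume T := by
  have hdisj : Pairwise (Disjoint on fun k : ℤ => Ico ((k : ℝ) * δ) (k * δ + δ)) := by
    simpa [zsmul_eq_mul, add_mul, add_comm] using pairwise_disjoint_Ico_add_zsmul (0 : ℝ) δ
  calc #F * ENNReal.ofReal δ = volume (⋃ k ∈ F, Ico ((k : ℝ) * δ) (k * δ + δ)) := by
        rw [measure_biUnion_finset (hdisj.set_pairwise _) fun _ _ => measurableSet_Ico]
        simp
    _ ≤ volume T := measure_mono <| iUnion₂_subset fun k hk => Ico_subset_Icc_self.trans (hF k hk)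

theorem exists_gridCover_of_volume_le {ι : Type*} [Fintype ι] (hδ : 0 < δ) {I : ι → Set ℝ}
    (hI : ∀ i, ∃ a b : ℝ, I i = Icc a b)
    (hvol : volume (⋃ i, I i) ≤ Fintype.card ι * ENNReal.ofReal δ) :
    ∃ K : Finset ℤ, #K ≤ 5 * Fintype.card ι ∧ ⋃ i, I i ⊆ ⋃ k ∈ K, gridCell δ k := by
  classical
  choose a b hab using hI
  have hcard : ∀ F : Finset ℤ, (∀ k ∈ F, gridCell δ k ⊆ ⋃ i, I i) → #F ≤ Fintype.card ι := by
    intro F hF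
    have h := (card_mul_le_volume_of_gridCell_subset hF).trans hvol
    rw [ENNReal.mul_le_mul_iff_left (by simpa using hδ) ENNReal.ofReal_ne_top] at h
    exact_mod_cast h
  have hinner : {k | gridCell δ k ⊆ ⋃ i, I i}.Finite := by
    by_contra hinf
    obtain ⟨F, hF, hFcard⟩ := Set.Infinite.exists_subset_card_eq hinf (Fintype.card ι + 1)
    have := hcard F hF
    omega
  -- a cell meeting `I i` but not inside it contains an endpoint of `I i`
  set boundary : Finset ℤ := Finset.univ.biUnion fun i =>
    {⌊a i / δ⌋, ⌊a i / δ⌋ - 1, ⌊b i / δ⌋, ⌊b i / δ⌋ - 1}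
  refine ⟨hinner.toFinset ∪ boundary, ?_, ?_⟩
  · have hboundary : #boundary ≤ Fintype.card ι * 4 :=
      Finset.card_biUnion_le_card_mul _ _ _ fun _ _ => Finset.card_le_four
    have := Finset.card_union_le hinner.toFinset boundary
    have := hcard hinner.toFinset (by simp)
    omega
  · intro x hx
    obtain ⟨i, hxi⟩ := mem_iUnion.1 hx
    rw [hab] at hxi
    have hxk := mem_gridCell_floor hδ x
    refine Set.mem_biUnion ?_ hxk
    rcases Icc_subset_or_left_mem_or_right_mem hxi hxk with hsub | ha | hb
    · refine Finset.mem_union_left _ (hinner.mem_toFinset.2 ?_)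
      exact (hab i ▸ hsub).trans (subset_iUnion I i)
    · refine Finset.mem_union_right _ (Finset.mem_biUnion.2 ⟨i, Finset.mem_univ _, ?_⟩)
      rcases eq_floor_or_of_mem_gridCell hδ ha with h | h <;> simp [h]
    · refine Finset.mem_union_right _ (Finset.mem_biUnion.2 ⟨i, Finset.mem_univ _, ?_⟩)
      rcases eq_floor_or_of_mem_gridCell hδ hb with h | h <;> simp [h]

theorem exists_gridCover_of_volume_lt_div_rpow {m : ℕ} {C β : ℝ} (hC : 0 < C) (hm : 0 < m)
    {I : Fin m → Set ℝ} (hI : ∀ i, ∃ a b : ℝ, I i = Icc a b)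
    (hvol : volume (⋃ i, I i) < ENNReal.ofReal (C / (m : ℝ) ^ β)) :
    ∃ K : Finset ℤ, #K ≤ 5 * m ∧ ⋃ i, I i ⊆ ⋃ k ∈ K, gridCell (C / (m : ℝ) ^ (1 + β)) k := by
  have hm' : (0 : ℝ) < m := Nat.cast_pos.2 hm
  have hmδ : (m : ℝ) * (C / (m : ℝ) ^ (1 + β)) = C / (m : ℝ) ^ β := by
    rw [Real.rpow_add hm', Real.rpow_one]
    field_simp
  simpa using exists_gridCover_of_volume_le (by positivity) hI <| by
    rw [Fintype.card_fin, ← ENNReal.ofReal_natCast, ← ENNReal.ofReal_mul hm'.le, hmδ]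
    exact hvol.le

theorem hausdorffMeasure_eq_zero_of_gridCell_covers {α : Type*} {l : Filter α} [l.NeBot] {d : ℝ}
    (hd : 0 ≤ d) {s : Set ℝ} {δ : α → ℝ} (hδ : ∀ n, 0 < δ n) (hδ_lim : Tendsto δ l (𝓝 0))
    (K : α → Finset ℤ) (hs : ∀ n, s ⊆ ⋃ k ∈ K n, gridCell (δ n) k)
    (hsum : Tendsto (fun n => (#(K n) : ℝ) * δ n ^ d) l (𝓝 0)) : μH[d] s = 0 := by
  refine hausdorffMeasure_eq_zero_of_finite_covers hd (fun n => ENNReal.ofReal (δ n))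
    (by simpa using ENNReal.tendsto_ofReal hδ_lim) (fun n => gridCell (δ n)) K
    (.of_forall fun n k _ => (ediam_gridCell k).le) (.of_forall hs) ?_
  rw [← ENNReal.ofReal_zero]
  refine (ENNReal.tendsto_ofReal hsum).congr fun n => ?_
  rw [ENNReal.ofReal_mul (Nat.cast_nonneg _), ENNReal.ofReal_natCast,
    ENNReal.ofReal_rpow_of_pos (hδ n)]

end Grid

theorem tendsto_mul_div_rpow_rpow_atTop {C γ d : ℝ} (hC : 0 ≤ C) (h : 1 < γ * d) :
    Tendsto (fun x : ℝ => x * (C / x ^ γ) ^ d) atTop (𝓝 0) := by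
  have hlim := (tendsto_rpow_neg_atTop (sub_pos.2 h)).const_mul (C ^ d)
  rw [mul_zero] at hlim
  refine hlim.congr' ((eventually_gt_atTop 0).mono fun x hx => ?_)
  dsimp only
  rw [Real.div_rpow hC (Real.rpow_nonneg hx.le _), ← Real.rpow_mul hx.le, neg_sub,
    Real.rpow_sub hx, Real.rpow_one]
  ring

/-- If `S ⊆ ℝ` admits covers `S ⊆ S_n`, where `S_n` is a union of `q_n` intervals,
`q_n → ∞`, and `|S_n| < C / q_n ^ β` for positive constants `C`, `β`, then the
Hausdorff dimension of `S` is at most `1 / (1 + β)`. -/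
theorem stmt_6 (S : Set ℝ) (C β : ℝ) (hC : 0 < C) (hβ : 0 < β)
    (q : ℕ → ℕ) (Sn : ℕ → Set ℝ)
    (hq : Filter.Tendsto q Filter.atTop Filter.atTop)
    (hcover : ∀ n, S ⊆ Sn n)
    (hintervals : ∀ n, ∃ I : Fin (q n) → Set ℝ,
      (∀ i, ∃ a b : ℝ, I i = Set.Icc a b) ∧ Sn n = ⋃ i, I i)
    (hmeas : ∀ n, volume (Sn n) < ENNReal.ofReal (C / (q n : ℝ) ^ β)) :
    dimH S ≤ ENNReal.ofReal (1 / (1 + β)) := by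
  have hq_pos : ∀ n, 0 < q n := fun n => Nat.pos_of_ne_zero fun h => by
    simpa [h, Real.zero_rpow hβ.ne'] using hmeas n
  set δ : ℕ → ℝ := fun n => C / (q n : ℝ) ^ (1 + β)
  have hgrid : ∀ n, ∃ K : Finset ℤ, #K ≤ 5 * q n ∧ S ⊆ ⋃ k ∈ K, gridCell (δ n) k := fun n => by
    obtain ⟨I, hI, hSn⟩ := hintervals n
    obtain ⟨K, hK, hcovK⟩ := exists_gridCover_of_volume_lt_div_rpow hC (hq_pos n) hI (hSn ▸ hmeas n)
    exact ⟨K, hK, (hcover n).trans (hSn ▸ hcovK)⟩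
  choose K hK hSK using hgrid
  refine dimH_le_ofReal_of_hausdorffMeasure_eq_zero fun d hd => ?_
  have hd_pos : 0 < d := (by positivity : 0 < 1 / (1 + β)).trans hd
  have hexp : 1 < (1 + β) * d := by rwa [div_lt_iff₀' (by positivity)] at hd
  have hq_lim : Tendsto (fun n => (q n : ℝ)) atTop atTop :=
    tendsto_natCast_atTop_atTop.comp hq
  refine hausdorffMeasure_eq_zero_of_gridCell_covers hd_pos.le
    (fun n => div_pos hC (Real.rpow_pos_of_pos (Nat.cast_pos.2 (hq_pos n)) _))
    (tendsto_const_nhds.div_atTop ((tendsto_rpow_atTop (by positivity)).comp hq_lim)) K hSK ?_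
  refine squeeze_zero (fun n => by positivity) (fun n => ?_)
    (by simpa using ((tendsto_mul_div_rpow_rpow_atTop hC.le hexp).comp hq_lim).const_mul 5)
  rw [← mul_assoc]
  gcongr
  exact_mod_cast hK n
end

section
/- The n×n matrix T over ℂ whose rows are: row j (for odd j ≤ n-1) has entries z_j at column j and z_{j+1} at column j+1 and zeros elsewhere, row j (for even j ≤ n-2) has 1 at columns j and j+1, and last row has 1 at columns 1 and n (where each z_j is a unit complex number), has rank n if ∏_{j even} z_j / ∏_{j odd} z_j ≠ 1 in the sense that 1 - e^{i∑(-1)^j β_j} ≠ 0, and rank n-1 otherwise. Equivalently: det T = ±(∏_{j odd} z_j)(1 - ∏_j z_j^{(-1)^j}). -/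
/-!
`T` is the cyclic bidiagonal matrix with diagonal `c` and
superdiagonal `d` (the last row wrapping around to column `0`), where `c i = z i`,
`d i = z (i + 1)` on even rows and `c i = d i = 1` on odd rows. In the Leibniz expansion of
such a determinant only the identity and the cyclic rotation survive, so for even `n`
`det T = ∏ c - ∏ d = (∏_{i even} z i) (1 - exp (i ∑ (-1)^(j+1) β j))`.
The leading `(n-1) × (n-1)` principal submatrix is upper triangular with the units `c i`
on its diagonal, so the rank is never below `n - 1`.
-/

open Real

namespace Equiv.Perm

open Fin.NatCast

theorem eq_one_or_eq_finRotate_of_forall {m : ℕ} {σ : Perm (Fin (m + 2))}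
    (hσ : ∀ i, σ i = i ∨ σ i = i + 1) : σ = 1 ∨ σ = finRotate (m + 2) := by
  by_cases hfix : ∀ i, σ i = i
  · exact Or.inl (Equiv.ext hfix)
  obtain ⟨i, hi⟩ := not_forall.1 hfix
  have hstep : ∀ x, σ x = x + 1 → σ (x + 1) = x + 1 + 1 := fun x hx =>
    (hσ _).resolve_left fun h => by simpa using σ.injective (hx.trans h.symm)
  have hshift : ∀ k : ℕ, σ (i + k) = i + k + 1 := by
    intro k
    induction k with
    | zero => simpa using (hσ i).resolve_left hi
    | succ k ih => simpa [add_assoc] using hstep _ ih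
  right
  ext j
  have := hshift (j - i : Fin (m + 2)).val
  rw [Fin.cast_val_eq_self, add_sub_cancel] at this
  rw [this, finRotate_apply]

end Equiv.Perm

namespace Matrix

theorem rank_lt_card_of_det_eq_zero {K ι : Type*} [Field K] [Fintype ι] [DecidableEq ι]
    {A : Matrix ι ι K} (h : A.det = 0) : A.rank < Fintype.card ι := by
  obtain ⟨v, hv, hAv⟩ := exists_mulVec_eq_zero_iff.2 h
  have hker : 0 < Module.finrank K (LinearMap.ker A.mulVecLin) :=
    Module.finrank_pos_iff_exists_ne_zero.2 ⟨⟨v, hAv⟩, fun h => hv (congrArg Subtype.val h)⟩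
  have := LinearMap.finrank_range_add_finrank_ker A.mulVecLin
  rw [Module.finrank_fintype_fun_eq_card] at this
  rw [rank]
  omega

variable {R : Type*} {n : ℕ} [NeZero n]

def cyclicBidiagonal [Zero R] (c d : Fin n → R) : Matrix (Fin n) (Fin n) R :=
  of fun i j => if j = i then c i else if j = i + 1 then d i else 0

variable {m : ℕ}

@[simp]
theorem cyclicBidiagonal_apply_self [Zero R] (c d : Fin n → R) (i : Fin n) :
    cyclicBidiagonal c d i i = c i := by
  simp [cyclicBidiagonal]

@[simp]
theorem cyclicBidiagonal_apply_add_one [Zero R] (c d : Fin (m + 2) → R) (i : Fin (m + 2)) :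
    cyclicBidiagonal c d i (i + 1) = d i := by
  simp [cyclicBidiagonal]

theorem cyclicBidiagonal_apply_of_ne [Zero R] (c d : Fin n → R) {i j : Fin n}
    (h₀ : j ≠ i) (h₁ : j ≠ i + 1) : cyclicBidiagonal c d i j = 0 := by
  simp [cyclicBidiagonal, h₀, h₁]

theorem det_cyclicBidiagonal [CommRing R] (c d : Fin (m + 2) → R) :
    (cyclicBidiagonal c d).det = ∏ i, c i + (-1) ^ (m + 1) * ∏ i, d i := by
  rw [← det_transpose, det_apply, Fintype.sum_eq_add 1 (finRotate (m + 2))]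
  · simp [sign_finRotate, Units.smul_def]
  · exact fun h => by simpa using congrArg (· 0) h
  · rintro σ ⟨h1, hrot⟩
    obtain ⟨i, hi⟩ : ∃ i, ¬(σ i = i ∨ σ i = i + 1) := by
      by_contra! h
      exact (Equiv.Perm.eq_one_or_eq_finRotate_of_forall h).elim h1 hrot
    push Not at hi
    rw [Finset.prod_eq_zero (Finset.mem_univ i) (cyclicBidiagonal_apply_of_ne c d hi.1 hi.2 :),
      smul_zero]

theorem le_rank_cyclicBidiagonal [CommRing R] [IsDomain R] (c d : Fin (m + 2) → R)
    (hc : ∀ i, c i ≠ 0) : m + 1 ≤ (cyclicBidiagonal c d).rank := by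
  have htri : ((cyclicBidiagonal c d).submatrix Fin.castSucc Fin.castSucc).IsUpperTriangular := by
    intro i j hji
    refine cyclicBidiagonal_apply_of_ne c d (Fin.castSucc_injective _ |>.ne hji.ne) ?_
    rw [Fin.coeSucc_eq_succ, Ne, Fin.ext_iff, Fin.val_castSucc, Fin.val_succ]
    have : (j : ℕ) < i := hji
    omega
  have hdet : ((cyclicBidiagonal c d).submatrix Fin.castSucc Fin.castSucc).det ≠ 0 := by
    rw [det_of_isUpperTriangular htri]
    exact Finset.prod_ne_zero_iff.2 fun i _ => by simpa using hc _
  calc m + 1 = ((cyclicBidiagonal c d).submatrix Fin.castSucc Fin.castSucc).rank := by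
        rw [rank_of_det_ne_zero hdet, Fintype.card_fin]
    _ ≤ (cyclicBidiagonal c d).rank := rank_submatrix_le _ _ _

theorem rank_cyclicBidiagonal_of_det_eq_zero {K : Type*} [Field K] {c d : Fin (m + 2) → K}
    (hc : ∀ i, c i ≠ 0) (h : (cyclicBidiagonal c d).det = 0) :
    (cyclicBidiagonal c d).rank = m + 1 := by
  have := rank_lt_card_of_det_eq_zero h
  rw [Fintype.card_fin] at this
  exact le_antisymm (Nat.le_of_lt_succ this) (le_rank_cyclicBidiagonal c d hc)

end Matrix

section AlternatingCycleMatrix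

open Matrix

variable {R : Type*} {m : ℕ}

def alternatingCycleMatrix [Zero R] [One R] {n : ℕ} (z : Fin n → R) : Matrix (Fin n) (Fin n) R :=
  of fun i j =>
    if (i : ℕ) % 2 = 0 then (if (j : ℕ) = i ∨ (j : ℕ) = i + 1 then z j else 0)
    else (if (j : ℕ) = i ∨ (j : ℕ) = ((i : ℕ) + 1) % n then 1 else 0)

theorem alternatingCycleMatrix_eq_cyclicBidiagonal [Zero R] [One R] (hm : Even m)
    (z : Fin (m + 2) → R) :
    alternatingCycleMatrix z = cyclicBidiagonal (fun i => if (i : ℕ) % 2 = 0 then z i else 1)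
      (fun i => if (i : ℕ) % 2 = 0 then z (i + 1) else 1) := by
  obtain ⟨k, rfl⟩ := hm
  ext i j
  have hsucc : ((i + 1 : Fin (k + k + 2)) : ℕ) = ((i : ℕ) + 1) % (k + k + 2) := by
    simp [Fin.val_add]
  obtain ⟨hlast, hmod⟩ | ⟨hlast, hmod⟩ :
      ((i : ℕ) + 1 < k + k + 2 ∧ ((i : ℕ) + 1) % (k + k + 2) = i + 1) ∨
        ((i : ℕ) + 1 = k + k + 2 ∧ ((i : ℕ) + 1) % (k + k + 2) = 0) := by
    rcases Nat.lt_or_ge ((i : ℕ) + 1) (k + k + 2) with h | h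
    · exact Or.inl ⟨h, Nat.mod_eq_of_lt h⟩
    · have h : (i : ℕ) + 1 = k + k + 2 := le_antisymm i.isLt h
      exact Or.inr ⟨h, by rw [h, Nat.mod_self]⟩
  -- as `m` is even, an even row `i` has `i + 1 < m + 2`: only odd rows wrap around
  all_goals
    rw [hmod] at hsucc
    simp only [alternatingCycleMatrix, cyclicBidiagonal, of_apply, Fin.ext_iff, hsucc, hmod]
    split_ifs <;> first | rfl | omega | exact congrArg z (Fin.ext (by omega))

theorem Fin.val_add_one_mod_two_eq_zero_iff (hm : Even m) (i : Fin (m + 2)) :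
    ((i + 1 : Fin (m + 2)) : ℕ) % 2 = 0 ↔ (i : ℕ) % 2 ≠ 0 := by
  obtain ⟨k, rfl⟩ := hm
  rw [Fin.val_add_one]
  split_ifs with h
  · rw [Fin.ext_iff, Fin.val_last] at h
    omega
  · omega

theorem det_alternatingCycleMatrix [CommRing R] (hm : Even m) (z : Fin (m + 2) → R) :
    (alternatingCycleMatrix z).det =
      ∏ i : Fin (m + 2), (if (i : ℕ) % 2 = 0 then z i else 1) -
        ∏ i : Fin (m + 2), (if (i : ℕ) % 2 = 0 then 1 else z i) := by
  rw [alternatingCycleMatrix_eq_cyclicBidiagonal hm, det_cyclicBidiagonal, hm.add_one.neg_one_pow,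
    neg_one_mul, ← sub_eq_add_neg]
  congr 1
  refine Fintype.prod_equiv (Equiv.addRight 1) _ _ fun i => ?_
  by_cases h : (i : ℕ) % 2 = 0 <;>
    simp [h, Fin.val_add_one_mod_two_eq_zero_iff hm]

end AlternatingCycleMatrix

theorem Complex.exp_I_mul_ofReal_eq_one_iff (x : ℝ) :
    Complex.exp (Complex.I * x) = 1 ↔ ∃ k : ℤ, x = 2 * π * k := by
  have := Circle.exp_eq_one (r := x)
  rw [Circle.ext_iff, Circle.coe_exp, Circle.coe_one] at this
  simpa [mul_comm, mul_left_comm] using this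

theorem prod_odd_exp_eq_prod_even_exp_mul {n : ℕ} (β : Fin n → ℝ) :
    ∏ i : Fin n, (if (i : ℕ) % 2 = 0 then 1 else Complex.exp (Complex.I * β i)) =
      (∏ i : Fin n, if (i : ℕ) % 2 = 0 then Complex.exp (Complex.I * β i) else 1) *
        Complex.exp (Complex.I * ↑(∑ j : Fin n, (-1 : ℝ) ^ ((j : ℕ) + 1) * β j)) := by
  rw [Complex.ofReal_sum, Finset.mul_sum, Complex.exp_sum, ← Finset.prod_mul_distrib]
  refine Finset.prod_congr rfl fun i _ => ?_
  split_ifs with h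
  · have : Odd ((i : ℕ) + 1) := Nat.odd_iff.2 (by omega)
    rw [← Complex.exp_add, this.neg_one_pow, ← Complex.exp_zero]
    push_cast
    ring_nf
  · have : Even ((i : ℕ) + 1) := Nat.even_iff.2 (by omega)
    rw [this.neg_one_pow]
    push_cast
    ring_nf

theorem stmt_8_general (n : ℕ) (hne : Even n) (β : Fin n → ℝ) :
    ((¬ ∃ k : ℤ, ∑ j : Fin n, (-1 : ℝ) ^ ((j : ℕ) + 1) * β j = 2 * π * k) →
      (Matrix.of (fun i j : Fin n =>
        if (i : ℕ) % 2 = 0 then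
          (if (j : ℕ) = (i : ℕ) ∨ (j : ℕ) = (i : ℕ) + 1 then
            Complex.exp (Complex.I * (β j : ℂ)) else 0)
        else
          (if (j : ℕ) = (i : ℕ) ∨ (j : ℕ) = ((i : ℕ) + 1) % n then 1 else 0))).rank = n) ∧
    ((∃ k : ℤ, ∑ j : Fin n, (-1 : ℝ) ^ ((j : ℕ) + 1) * β j = 2 * π * k) →
      (Matrix.of (fun i j : Fin n =>
        if (i : ℕ) % 2 = 0 then
          (if (j : ℕ) = (i : ℕ) ∨ (j : ℕ) = (i : ℕ) + 1 then
            Complex.exp (Complex.I * (β j : ℂ)) else 0)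
        else
          (if (j : ℕ) = (i : ℕ) ∨ (j : ℕ) = ((i : ℕ) + 1) % n then 1 else 0))).rank = n - 1) := by
  change (_ → (alternatingCycleMatrix fun j => Complex.exp (Complex.I * β j)).rank = n) ∧
    (_ → (alternatingCycleMatrix fun j => Complex.exp (Complex.I * β j)).rank = n - 1)
  obtain rfl | ⟨m, rfl⟩ : n = 0 ∨ ∃ m, n = m + 2 := by
    obtain ⟨k, rfl⟩ := hne
    rcases k with _ | k
    · exact Or.inl rfl
    · exact Or.inr ⟨k + k, by omega⟩
  · exact ⟨fun h => absurd ⟨0, by simp⟩ h, fun _ => Nat.le_zero.1 (Matrix.rank_le_width _)⟩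
  have hm : Even m := by simpa [Nat.even_add] using hne
  set S := ∑ j : Fin (m + 2), (-1 : ℝ) ^ ((j : ℕ) + 1) * β j
  have hc : ∀ i : Fin (m + 2),
      (if (i : ℕ) % 2 = 0 then Complex.exp (Complex.I * β i) else 1) ≠ 0 := fun i => by
    split_ifs <;> simp [Complex.exp_ne_zero]
  have hdet : (alternatingCycleMatrix fun j => Complex.exp (Complex.I * β j)).det =
      (∏ i : Fin (m + 2), if (i : ℕ) % 2 = 0 then Complex.exp (Complex.I * β i) else 1) *
        (1 - Complex.exp (Complex.I * S)) := by
    rw [det_alternatingCycleMatrix hm, prod_odd_exp_eq_prod_even_exp_mul, mul_one_sub]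
  rw [alternatingCycleMatrix_eq_cyclicBidiagonal hm] at hdet ⊢
  refine ⟨fun h => ?_, fun h => Matrix.rank_cyclicBidiagonal_of_det_eq_zero hc ?_⟩
  · refine (Matrix.rank_of_det_ne_zero ?_).trans (Fintype.card_fin _)
    rw [hdet]
    exact mul_ne_zero (Finset.prod_ne_zero_iff.2 fun i _ => hc i)
      (sub_ne_zero.2 (Ne.symm (mt (Complex.exp_I_mul_ofReal_eq_one_iff S).1 h)))
  · rw [hdet, (Complex.exp_I_mul_ofReal_eq_one_iff S).2 h, sub_self, mul_zero]

/-- Let `n` be even, `β j` real, and `T` the `n × n` matrix whose (0-indexed) even rows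
have entries `e^{iβ_j}, e^{iβ_{j+1}}` at columns `j, j+1`, and whose odd rows have `1` at
columns `j` and `(j+1) mod n` (so the last row has `1` at the first and last columns).
Then `T` has rank `n` if `∑_j (-1)^{j+1} β_j ∉ 2πℤ`, and rank `n - 1` otherwise. -/
theorem stmt_8 (n : ℕ) (hn : 0 < n) (hne : Even n) (β : Fin n → ℝ) :
    ((¬ ∃ k : ℤ, ∑ j : Fin n, (-1 : ℝ) ^ ((j : ℕ) + 1) * β j = 2 * π * k) →
      (Matrix.of (fun i j : Fin n =>
        if (i : ℕ) % 2 = 0 then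
          (if (j : ℕ) = (i : ℕ) ∨ (j : ℕ) = (i : ℕ) + 1 then
            Complex.exp (Complex.I * (β j : ℂ)) else 0)
        else
          (if (j : ℕ) = (i : ℕ) ∨ (j : ℕ) = ((i : ℕ) + 1) % n then 1 else 0))).rank = n) ∧
    ((∃ k : ℤ, ∑ j : Fin n, (-1 : ℝ) ^ ((j : ℕ) + 1) * β j = 2 * π * k) →
      (Matrix.of (fun i j : Fin n =>
        if (i : ℕ) % 2 = 0 then
          (if (j : ℕ) = (i : ℕ) ∨ (j : ℕ) = (i : ℕ) + 1 then
            Complex.exp (Complex.I * (β j : ℂ)) else 0)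
        else
          (if (j : ℕ) = (i : ℕ) ∨ (j : ℕ) = ((i : ℕ) + 1) % n then 1 else 0))).rank = n - 1) :=
  stmt_8_general n hne β
end

section
/- Let A be a bounded operator on a Hilbert space and Q = [[0, A],[A*, 0]] the self-adjoint block operator on H ⊕ H. If 0 ∈ σ(Q), then σ(Q) = √(σ(AA*)) ∪ (-√(σ(AA*))) ∪ {0}, where √S = {√x : x ∈ S} for S ⊆ [0,∞). -/
/-!
Conjugating by `diag(1, -1)` turns `Q` into `-Q`, so `σ(Q)` is symmetric, and `Q² = diag(AA*, A*A)`
gives `σ(Q)² = σ(AA*) ∪ σ(A*A)`, where `σ(A*A)` and `σ(AA*)` agree away from `0`. As `σ(AA*)`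
lies in `[0, ∞)`, a nonzero point of `σ(Q)` is `±√x` with `x ∈ σ(AA*)`, and conversely one of
`±√x`, hence by symmetry both, lie in `σ(Q)`.
-/

namespace ContinuousLinearMap

variable {𝕜 E F : Type*} [NontriviallyNormedField 𝕜]
  [NormedAddCommGroup E] [NormedSpace 𝕜 E] [NormedAddCommGroup F] [NormedSpace 𝕜 F]

theorem spectrum_prodMap [CompleteSpace E] [CompleteSpace F] (f : E →L[𝕜] E) (g : F →L[𝕜] F) :
    spectrum 𝕜 (f.prodMap g) = spectrum 𝕜 f ∪ spectrum 𝕜 g := by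
  ext z
  have : algebraMap 𝕜 _ z - f.prodMap g =
      (algebraMap 𝕜 _ z - f).prodMap (algebraMap 𝕜 _ z - g) := by
    ext <;> simp [Algebra.algebraMap_eq_smul_one]
  simp only [spectrum.mem_iff, Set.mem_union, this, isUnit_iff_bijective, coe_prodMap',
    Prod.map_bijective]
  tauto

/-- The block operator `[[0, A], [B, 0]]` on `E × F`. -/
def blockAntidiag (A : F →L[𝕜] E) (B : E →L[𝕜] F) : (E × F) →L[𝕜] (E × F) :=
  (A ∘L snd 𝕜 E F).prod (B ∘L fst 𝕜 E F)

@[simp]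
theorem blockAntidiag_apply (A : F →L[𝕜] E) (B : E →L[𝕜] F) (x : E × F) :
    blockAntidiag A B x = (A x.2, B x.1) := rfl

theorem blockAntidiag_sq (A : F →L[𝕜] E) (B : E →L[𝕜] F) :
    blockAntidiag A B ^ 2 = (A ∘L B).prodMap (B ∘L A) := by
  ext <;> simp [sq]

theorem neg_spectrum_blockAntidiag (A : F →L[𝕜] E) (B : E →L[𝕜] F) :
    -spectrum 𝕜 (blockAntidiag A B) = spectrum 𝕜 (blockAntidiag A B) := by
  let J : (E × F) →L[𝕜] (E × F) :=
    (ContinuousLinearMap.id 𝕜 E).prodMap (-ContinuousLinearMap.id 𝕜 F)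
  have hJ : J * J = 1 := by ext <;> simp [J]
  let u : ((E × F) →L[𝕜] (E × F))ˣ := ⟨J, J, hJ, hJ⟩
  have : u * blockAntidiag A B * ↑u⁻¹ = -blockAntidiag A B := by
    ext <;> simp [u, J]
  rw [spectrum.neg_eq, ← this, spectrum.units_conjugate]

end ContinuousLinearMap

namespace ContinuousLinearMap

theorem sq_image_spectrum_blockAntidiag_union_zero {E : Type*} [NormedAddCommGroup E]
    [NormedSpace ℂ E] [CompleteSpace E] (A B : E →L[ℂ] E)
    (h : (spectrum ℂ (blockAntidiag A B)).Nonempty) :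
    (· ^ 2) '' spectrum ℂ (blockAntidiag A B) ∪ {0} = spectrum ℂ (A ∘L B) ∪ {0} := by
  rw [← spectrum.map_pow_of_nonempty h, blockAntidiag_sq, spectrum_prodMap,
    Set.union_union_distrib_right, ← quasispectrum_eq_spectrum_union_zero,
    ← quasispectrum_eq_spectrum_union_zero]
  exact Set.union_eq_left.2 (quasispectrum.mul_comm B A).le

end ContinuousLinearMap

theorem Complex.sq_eq_ofReal_iff {x : ℝ} (hx : 0 ≤ x) {z : ℂ} :
    z ^ 2 = x ↔ z = √x ∨ z = -√x := by
  rw [← sq_eq_sq_iff_eq_or_eq_neg, ← Complex.ofReal_pow, Real.sq_sqrt hx]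

open ComplexOrder in
theorem eq_sqrt_image_union_neg_sqrt_image_union_zero {S T : Set ℂ} (hS : -S = S) (h0 : 0 ∈ S)
    (hT : ∀ z ∈ T, 0 ≤ z) (hST : (· ^ 2) '' S ∪ {0} = T ∪ {0}) :
    S = (fun x : ℝ => (Real.sqrt x : ℂ)) '' {x : ℝ | (x : ℂ) ∈ T}
        ∪ (fun x : ℝ => (-(Real.sqrt x) : ℂ)) '' {x : ℝ | (x : ℂ) ∈ T} ∪ {0} := by
  have hsq {x : ℝ} (hx : (x : ℂ) ∈ T) (z : ℂ) : z ^ 2 = x ↔ z = √x ∨ z = -√x :=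
    Complex.sq_eq_ofReal_iff (Complex.zero_le_real.1 (hT _ hx))
  have hsqrt_mem {x : ℝ} (hx : (x : ℂ) ∈ T) : (√x : ℂ) ∈ S := by
    obtain ⟨ν, hν, hνx⟩ | hx0 : (x : ℂ) ∈ (· ^ 2) '' S ∪ {0} := hST ▸ Or.inl hx
    · rcases (hsq hx ν).1 hνx with rfl | rfl
      exacts [hν, hS ▸ Set.mem_neg.2 hν]
    · simpa [Complex.ofReal_eq_zero.1 hx0] using h0
  ext z
  constructor
  · intro hz
    by_cases hz0 : z = 0
    · exact Or.inr hz0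
    have hzT : z ^ 2 ∈ T :=
      ((hST ▸ Or.inl ⟨z, hz, rfl⟩ : z ^ 2 ∈ T ∪ {0})).resolve_right (pow_ne_zero 2 hz0)
    have hre : z ^ 2 = ((z ^ 2).re : ℂ) :=
      Complex.eq_re_of_ofReal_le (Complex.ofReal_zero ▸ hT _ hzT)
    rw [hre] at hzT
    rcases (hsq hzT z).1 hre with h | h
    exacts [Or.inl (Or.inl ⟨_, hzT, h.symm⟩), Or.inl (Or.inr ⟨_, hzT, h.symm⟩)]
  · rintro ((⟨x, hx, rfl⟩ | ⟨x, hx, rfl⟩) | rfl)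
    exacts [hsqrt_mem hx, hS ▸ Set.neg_mem_neg.2 (hsqrt_mem hx), h0]

/-- Let `A` be a bounded operator on a Hilbert space `H` and let `Q = [[0, A], [A*, 0]]`
be the block operator on `H ⊕ H`. If `0 ∈ σ(Q)`, then
`σ(Q) = √(σ(AA*)) ∪ (-√(σ(AA*))) ∪ {0}` (square roots of the real points of `σ(AA*)`). -/
theorem stmt_13 {H : Type*} [NormedAddCommGroup H] [InnerProductSpace ℂ H]
    [CompleteSpace H] (A : H →L[ℂ] H)
    (Q : (H × H) →L[ℂ] (H × H))
    (hQ : ∀ x : H × H, Q x = (A x.2, ContinuousLinearMap.adjoint A x.1))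
    (h0 : (0 : ℂ) ∈ spectrum ℂ Q) :
    spectrum ℂ Q =
      (fun x : ℝ => (Real.sqrt x : ℂ)) ''
          {x : ℝ | (x : ℂ) ∈ spectrum ℂ (A ∘L ContinuousLinearMap.adjoint A)}
        ∪ (fun x : ℝ => (-(Real.sqrt x) : ℂ)) ''
          {x : ℝ | (x : ℂ) ∈ spectrum ℂ (A ∘L ContinuousLinearMap.adjoint A)}
        ∪ {0} := by
  obtain rfl : Q = .blockAntidiag A (ContinuousLinearMap.adjoint A) :=
    ContinuousLinearMap.ext hQ
  refine eq_sqrt_image_union_neg_sqrt_image_union_zero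
    (ContinuousLinearMap.neg_spectrum_blockAntidiag _ _) h0 (fun z hz => ?_)
    (ContinuousLinearMap.sq_image_spectrum_blockAntidiag_union_zero _ _ ⟨0, h0⟩)
  open ComplexOrder in exact spectrum_nonneg_of_nonneg (mul_star_self_nonneg A) hz
end
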